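/- arXiv:2208.13828 — 4 statements merged into one kernel-verified Lean document; each statement's English description precedes it below -/
import Mathlib

section
/- Let Ω be a finite nonempty set, f : Ω → ℝ, x₀ ∈ Ω, and let A = {x ∈ Ω : f(x) ≥ f(x₀)}. Let P₀ be a probability mass function on Ω with 0 < P₀(A) < 1 (where P₀(A) = ∑_{x∈A} P₀(x)). For θ ≥ 0 define the exponentially tilted distribution P_θ(x) = e^{θ f(x)} P₀(x) / M(θ) with M(θ) = ∑_{x∈Ω} e^{θ f(x)} P₀(x). Then the map θ ↦ P_θ(A) = ∑_{x∈A} P_θ(x) is strictly increasing on [0,∞). -/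
/-- For a finite nonempty Ω with pmf P₀, target set
`A = {x : f x ≥ f x₀}` with `0 < P₀(A) < 1`, the exponentially tilted
probability `θ ↦ P_θ(A)` is strictly increasing on `[0, ∞)`. -/
theorem stmt_0 {Ω : Type*} [Fintype Ω] [Nonempty Ω]
    (f : Ω → ℝ) (x₀ : Ω) (P₀ : Ω → ℝ)
    (hP₀ : ∀ x, 0 ≤ P₀ x) (hP₀sum : ∑ x, P₀ x = 1)
    (A : Finset Ω) (hA : ∀ x, x ∈ A ↔ f x₀ ≤ f x)
    (M : ℝ → ℝ) (hM : ∀ θ, M θ = ∑ x, Real.exp (θ * f x) * P₀ x)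
    (P : ℝ → Ω → ℝ) (hP : ∀ θ x, P θ x = Real.exp (θ * f x) * P₀ x / M θ)
    (h0 : 0 < ∑ x ∈ A, P₀ x) (h1 : ∑ x ∈ A, P₀ x < 1) :
    StrictMonoOn (fun θ => ∑ x ∈ A, P θ x) (Set.Ici (0 : ℝ)) := by
  classical
  set g : ℝ → ℝ := fun θ => ∑ x ∈ A, Real.exp (θ * f x) * P₀ x with hg
  set h : ℝ → ℝ := fun θ => ∑ x ∈ Aᶜ, Real.exp (θ * f x) * P₀ x with hh
  have hMgh : ∀ θ, M θ = g θ + h θ := by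
    intro θ
    rw [hM θ]
    exact (Finset.sum_add_sum_compl A _).symm
  obtain ⟨a, haA, hpa⟩ : ∃ a ∈ A, 0 < P₀ a := by
    by_contra hcon
    push_neg at hcon
    have : ∑ x ∈ A, P₀ x ≤ 0 := Finset.sum_nonpos hcon
    linarith
  have hAc : 0 < ∑ x ∈ Aᶜ, P₀ x := by
    have hsplit := Finset.sum_add_sum_compl A P₀
    rw [hP₀sum] at hsplit
    linarith
  obtain ⟨b, hbA, hpb⟩ : ∃ b ∈ Aᶜ, 0 < P₀ b := by
    by_contra hcon
    push_neg at hcon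
    have : ∑ x ∈ Aᶜ, P₀ x ≤ 0 := Finset.sum_nonpos hcon
    linarith
  have hfb : ∀ y ∈ Aᶜ, f y < f x₀ := by
    intro y hy
    have : y ∉ A := Finset.mem_compl.mp hy
    have := (hA y).not.mp this
    exact lt_of_not_ge (fun hle => (Finset.mem_compl.mp hy) ((hA y).mpr hle))
  have hterm_nonneg : ∀ θ (x : Ω), 0 ≤ Real.exp (θ * f x) * P₀ x := fun θ x =>
    mul_nonneg (Real.exp_pos _).le (hP₀ x)
  have hgpos : ∀ θ, 0 < g θ := by
    intro θ
    exact Finset.sum_pos' (fun x _ => hterm_nonneg θ x)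
      ⟨a, haA, mul_pos (Real.exp_pos _) hpa⟩
  have hhpos : ∀ θ, 0 < h θ := by
    intro θ
    exact Finset.sum_pos' (fun x _ => hterm_nonneg θ x)
      ⟨b, hbA, mul_pos (Real.exp_pos _) hpb⟩
  have key : ∀ θ₁ θ₂ : ℝ, θ₁ < θ₂ → g θ₁ * h θ₂ < g θ₂ * h θ₁ := by
    intro θ₁ θ₂ hlt
    have hx : ∀ x ∈ A, ∀ y ∈ Aᶜ,
        Real.exp (θ₁ * f x) * P₀ x * (Real.exp (θ₂ * f y) * P₀ y) ≤
        Real.exp (θ₂ * f x) * P₀ x * (Real.exp (θ₁ * f y) * P₀ y) := by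
      intro x hxA y hyA
      have hfy : f y < f x := lt_of_lt_of_le (hfb y hyA) ((hA x).mp hxA)
      have hexp : Real.exp (θ₁ * f x + θ₂ * f y) ≤ Real.exp (θ₂ * f x + θ₁ * f y) := by
        apply Real.exp_le_exp.mpr; nlinarith
      calc Real.exp (θ₁ * f x) * P₀ x * (Real.exp (θ₂ * f y) * P₀ y)
          = Real.exp (θ₁ * f x + θ₂ * f y) * (P₀ x * P₀ y) := by
            rw [Real.exp_add]; ring
        _ ≤ Real.exp (θ₂ * f x + θ₁ * f y) * (P₀ x * P₀ y) :=
            mul_le_mul_of_nonneg_right hexp (mul_nonneg (hP₀ x) (hP₀ y))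
        _ = Real.exp (θ₂ * f x) * P₀ x * (Real.exp (θ₁ * f y) * P₀ y) := by
            rw [Real.exp_add]; ring
    have hxa : Real.exp (θ₁ * f a) * P₀ a * h θ₂ < Real.exp (θ₂ * f a) * P₀ a * h θ₁ := by
      rw [hh]
      simp only [Finset.mul_sum]
      apply Finset.sum_lt_sum
      · intro y hy; exact hx a haA y hy
      · refine ⟨b, hbA, ?_⟩
        have hfy : f b < f a := lt_of_lt_of_le (hfb b hbA) ((hA a).mp haA)
        have hexp : Real.exp (θ₁ * f a + θ₂ * f b) < Real.exp (θ₂ * f a + θ₁ * f b) := by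
          apply Real.exp_lt_exp.mpr; nlinarith
        calc Real.exp (θ₁ * f a) * P₀ a * (Real.exp (θ₂ * f b) * P₀ b)
            = Real.exp (θ₁ * f a + θ₂ * f b) * (P₀ a * P₀ b) := by
              rw [Real.exp_add]; ring
          _ < Real.exp (θ₂ * f a + θ₁ * f b) * (P₀ a * P₀ b) := by
              exact mul_lt_mul_of_pos_right hexp (mul_pos hpa hpb)
          _ = Real.exp (θ₂ * f a) * P₀ a * (Real.exp (θ₁ * f b) * P₀ b) := by
              rw [Real.exp_add]; ring
    have hgh1 : g θ₁ * h θ₂ = ∑ x ∈ A, Real.exp (θ₁ * f x) * P₀ x * h θ₂ := by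
      rw [hg]; rw [Finset.sum_mul]
    have hgh2 : g θ₂ * h θ₁ = ∑ x ∈ A, Real.exp (θ₂ * f x) * P₀ x * h θ₁ := by
      rw [hg]; rw [Finset.sum_mul]
    rw [hgh1, hgh2]
    apply Finset.sum_lt_sum
    · intro x hxA
      rw [hh]
      simp only [Finset.mul_sum]
      exact Finset.sum_le_sum (fun y hy => hx x hxA y hy)
    · exact ⟨a, haA, hxa⟩
  intro θ₁ _ θ₂ _ hlt
  have hPA : ∀ θ, ∑ x ∈ A, P θ x = g θ / (g θ + h θ) := by
    intro θ
    rw [← hMgh θ]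
    simp only [hP]
    rw [← Finset.sum_div]
  show ∑ x ∈ A, P θ₁ x < ∑ x ∈ A, P θ₂ x
  rw [hPA θ₁, hPA θ₂]
  rw [div_lt_div_iff₀ (by linarith [hgpos θ₁, hhpos θ₁]) (by linarith [hgpos θ₂, hhpos θ₂])]
  nlinarith [key θ₁ θ₂ hlt]
end

section
/- Let Ω be a finite nonempty set, f : Ω → ℝ, x₀ ∈ Ω, A = {x ∈ Ω : f(x) ≥ f(x₀)}, and P₀ a probability mass function on Ω with 0 < P₀(A) < 1. Define the active information I⁺(θ) = log(P_θ(A)/P₀(A)), where P_θ is the exponential tilting of P₀ by f. Then I⁺ is strictly increasing on [0,∞), I⁺(0) = 0, and lim_{θ→∞} I⁺(θ) = −log P₀(A). -/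
open Filter Real


/-- Active information `I⁺(θ) = log (P_θ(A) / P₀(A))` of the
exponential tilting is strictly increasing on `[0,∞)`, equals 0 at `θ = 0`,
and tends to `-log P₀(A)` as `θ → ∞`. -/
theorem stmt_2 {Ω : Type*} [Fintype Ω] [Nonempty Ω]
    (f : Ω → ℝ) (x₀ : Ω) (P₀ : Ω → ℝ)
    (hP₀ : ∀ x, 0 ≤ P₀ x) (hP₀sum : ∑ x, P₀ x = 1)
    (A : Finset Ω) (hA : ∀ x, x ∈ A ↔ f x₀ ≤ f x)
    (M : ℝ → ℝ) (hM : ∀ θ, M θ = ∑ x, Real.exp (θ * f x) * P₀ x)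
    (P : ℝ → Ω → ℝ) (hP : ∀ θ x, P θ x = Real.exp (θ * f x) * P₀ x / M θ)
    (h0 : 0 < ∑ x ∈ A, P₀ x) (h1 : ∑ x ∈ A, P₀ x < 1)
    (I : ℝ → ℝ)
    (hI : ∀ θ, I θ = Real.log ((∑ x ∈ A, P θ x) / ∑ x ∈ A, P₀ x)) :
    StrictMonoOn I (Set.Ici (0 : ℝ)) ∧ I 0 = 0 ∧
      Filter.Tendsto I Filter.atTop (nhds (-Real.log (∑ x ∈ A, P₀ x))) := by
  classical
  set a := ∑ x ∈ A, P₀ x with ha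
  have hsplit : ∀ g : Ω → ℝ, ∑ x ∈ A, g x + ∑ x ∈ Aᶜ, g x = ∑ x, g x :=
    fun g => Finset.sum_add_sum_compl A g
  have hac : ∑ x ∈ Aᶜ, P₀ x = 1 - a := by
    have h := hsplit P₀
    rw [hP₀sum] at h
    linarith
  obtain ⟨x₁, hx₁A, hx₁⟩ : ∃ x ∈ A, 0 < P₀ x := by
    by_contra h
    push_neg at h
    have : a ≤ 0 := Finset.sum_nonpos fun x hx => h x hx
    linarith
  obtain ⟨y₁, hy₁A, hy₁⟩ : ∃ y ∈ Aᶜ, 0 < P₀ y := by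
    by_contra h
    push_neg at h
    have h2 : ∑ x ∈ Aᶜ, P₀ x ≤ 0 := Finset.sum_nonpos fun x hx => h x hx
    rw [hac] at h2
    linarith
  have hfy : ∀ y ∈ Aᶜ, f y < f x₀ := by
    intro y hy
    have := Finset.mem_compl.mp hy
    rw [hA] at this
    exact lt_of_not_ge this
  have hSpos : ∀ θ : ℝ, 0 < ∑ x ∈ A, Real.exp (θ * f x) * P₀ x := fun θ =>
    Finset.sum_pos' (fun x _ => mul_nonneg (Real.exp_pos _).le (hP₀ x)) ⟨x₁, hx₁A, mul_pos (Real.exp_pos _) hx₁⟩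
  have hTpos : ∀ θ : ℝ, 0 < ∑ x ∈ Aᶜ, Real.exp (θ * f x) * P₀ x := fun θ =>
    Finset.sum_pos' (fun x _ => mul_nonneg (Real.exp_pos _).le (hP₀ x)) ⟨y₁, hy₁A, mul_pos (Real.exp_pos _) hy₁⟩
  have hMeq : ∀ θ, M θ = (∑ x ∈ A, Real.exp (θ * f x) * P₀ x)
      + ∑ x ∈ Aᶜ, Real.exp (θ * f x) * P₀ x := fun θ => by
    rw [hM]; exact (hsplit _).symm
  have hMpos : ∀ θ, 0 < M θ := fun θ => by
    rw [hMeq]; have := hSpos θ; have := hTpos θ; linarith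
  have hPA : ∀ θ, ∑ x ∈ A, P θ x
      = (∑ x ∈ A, Real.exp (θ * f x) * P₀ x) / M θ := fun θ => by
    simp only [hP]
    rw [Finset.sum_div]
  have hIeq : ∀ θ, I θ = Real.log ((∑ x ∈ A, Real.exp (θ * f x) * P₀ x) / M θ)
      - Real.log a := fun θ => by
    rw [hI, hPA, Real.log_div (ne_of_gt (div_pos (hSpos θ) (hMpos θ))) (ne_of_gt h0)]
  -- key cross inequality
  have key : ∀ θ₁ θ₂ : ℝ, θ₁ < θ₂ →
      (∑ x ∈ A, Real.exp (θ₁ * f x) * P₀ x) * (∑ y ∈ Aᶜ, Real.exp (θ₂ * f y) * P₀ y)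
      < (∑ x ∈ A, Real.exp (θ₂ * f x) * P₀ x) * (∑ y ∈ Aᶜ, Real.exp (θ₁ * f y) * P₀ y) := by
    intro θ₁ θ₂ hlt
    rw [Finset.sum_mul_sum, Finset.sum_mul_sum, ← Finset.sum_product', ← Finset.sum_product']
    refine Finset.sum_lt_sum ?_ ⟨(x₁, y₁), Finset.mem_product.2 ⟨hx₁A, hy₁A⟩, ?_⟩
    · rintro ⟨x, y⟩ hxy
      obtain ⟨hx, hy⟩ := Finset.mem_product.mp hxy
      have hxyf : f y < f x := lt_of_lt_of_le (hfy y hy) ((hA x).mp hx)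
      have he : θ₁ * f x + θ₂ * f y ≤ θ₂ * f x + θ₁ * f y := by nlinarith
      calc Real.exp (θ₁ * f x) * P₀ x * (Real.exp (θ₂ * f y) * P₀ y)
          = Real.exp (θ₁ * f x + θ₂ * f y) * (P₀ x * P₀ y) := by rw [Real.exp_add]; ring
        _ ≤ Real.exp (θ₂ * f x + θ₁ * f y) * (P₀ x * P₀ y) :=
            mul_le_mul_of_nonneg_right (Real.exp_le_exp.2 he) (mul_nonneg (hP₀ x) (hP₀ y))
        _ = Real.exp (θ₂ * f x) * P₀ x * (Real.exp (θ₁ * f y) * P₀ y) := by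
            rw [Real.exp_add]; ring
    · have hxyf : f y₁ < f x₁ := lt_of_lt_of_le (hfy y₁ hy₁A) ((hA x₁).mp hx₁A)
      have he : θ₁ * f x₁ + θ₂ * f y₁ < θ₂ * f x₁ + θ₁ * f y₁ := by nlinarith
      calc Real.exp (θ₁ * f x₁) * P₀ x₁ * (Real.exp (θ₂ * f y₁) * P₀ y₁)
          = Real.exp (θ₁ * f x₁ + θ₂ * f y₁) * (P₀ x₁ * P₀ y₁) := by rw [Real.exp_add]; ring
        _ < Real.exp (θ₂ * f x₁ + θ₁ * f y₁) * (P₀ x₁ * P₀ y₁) :=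
            mul_lt_mul_of_pos_right (Real.exp_lt_exp.2 he) (mul_pos hx₁ hy₁)
        _ = Real.exp (θ₂ * f x₁) * P₀ x₁ * (Real.exp (θ₁ * f y₁) * P₀ y₁) := by
            rw [Real.exp_add]; ring
  -- strict monotonicity
  have hmono : StrictMonoOn I (Set.Ici (0 : ℝ)) := by
    intro θ₁ _ θ₂ _ hlt
    rw [hIeq θ₁, hIeq θ₂]
    have h2 : (∑ x ∈ A, Real.exp (θ₁ * f x) * P₀ x) / M θ₁
        < (∑ x ∈ A, Real.exp (θ₂ * f x) * P₀ x) / M θ₂ := by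
      rw [div_lt_div_iff₀ (hMpos θ₁) (hMpos θ₂), hMeq θ₁, hMeq θ₂]
      nlinarith [key θ₁ θ₂ hlt, hSpos θ₁, hSpos θ₂]
    have := Real.log_lt_log (div_pos (hSpos θ₁) (hMpos θ₁)) h2
    linarith
  -- value at zero
  have hI0 : I 0 = 0 := by
    have hM0 : M 0 = 1 := by
      rw [hM]; simp [hP₀sum]
    rw [hIeq 0]
    simp [hM0, ha]
  refine ⟨hmono, hI0, ?_⟩
  -- limit
  have hAcne : (Aᶜ : Finset Ω).Nonempty := ⟨y₁, hy₁A⟩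
  set b := Aᶜ.sup' hAcne f with hb
  have hblt : b < f x₀ := (Finset.sup'_lt_iff hAcne).mpr hfy
  have hSlb : ∀ θ : ℝ, 0 ≤ θ →
      Real.exp (θ * f x₀) * a ≤ ∑ x ∈ A, Real.exp (θ * f x) * P₀ x := by
    intro θ hθ
    rw [ha, Finset.mul_sum]
    refine Finset.sum_le_sum fun x hx => ?_
    exact mul_le_mul_of_nonneg_right
      (Real.exp_le_exp.2 (mul_le_mul_of_nonneg_left ((hA x).mp hx) hθ)) (hP₀ x)
  have hTub : ∀ θ : ℝ, 0 ≤ θ →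
      (∑ y ∈ Aᶜ, Real.exp (θ * f y) * P₀ y) ≤ Real.exp (θ * b) * (1 - a) := by
    intro θ hθ
    rw [← hac, Finset.mul_sum]
    refine Finset.sum_le_sum fun y hy => ?_
    exact mul_le_mul_of_nonneg_right
      (Real.exp_le_exp.2 (mul_le_mul_of_nonneg_left (Finset.le_sup' f hy) hθ)) (hP₀ y)
  have hrbound : ∀ θ : ℝ, 0 ≤ θ →
      (∑ y ∈ Aᶜ, Real.exp (θ * f y) * P₀ y) / (∑ x ∈ A, Real.exp (θ * f x) * P₀ x)
        ≤ Real.exp (θ * (b - f x₀)) * ((1 - a) / a) := by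
    intro θ hθ
    have h3 : Real.exp (θ * b) * (1 - a) / (Real.exp (θ * f x₀) * a)
        = Real.exp (θ * (b - f x₀)) * ((1 - a) / a) := by
      rw [show θ * (b - f x₀) = θ * b - θ * f x₀ by ring, Real.exp_sub]
      field_simp
    rw [← h3]
    exact div_le_div₀ (mul_nonneg (Real.exp_pos _).le (by linarith)) (hTub θ hθ) (mul_pos (Real.exp_pos _) h0) (hSlb θ hθ)
  have hd : b - f x₀ < 0 := by linarith
  have hu : Tendsto (fun θ : ℝ => Real.exp (θ * (b - f x₀)) * ((1 - a) / a))
      atTop (nhds 0) := by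
    have h4 : Tendsto (fun θ : ℝ => θ * (b - f x₀)) atTop atBot :=
      tendsto_id.atTop_mul_const_of_neg hd
    have h5 := Real.tendsto_exp_atBot.comp h4
    have h6 := h5.mul_const ((1 - a) / a)
    rwa [zero_mul] at h6
  have hr : Tendsto (fun θ : ℝ =>
      (∑ y ∈ Aᶜ, Real.exp (θ * f y) * P₀ y) / (∑ x ∈ A, Real.exp (θ * f x) * P₀ x))
      atTop (nhds 0) := by
    refine tendsto_of_tendsto_of_tendsto_of_le_of_le' tendsto_const_nhds hu ?_ ?_
    · filter_upwards with θ
      exact le_of_lt (div_pos (hTpos θ) (hSpos θ))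
    · filter_upwards [eventually_ge_atTop (0 : ℝ)] with θ hθ
      exact hrbound θ hθ
  have hfrac : ∀ θ : ℝ, (∑ x ∈ A, Real.exp (θ * f x) * P₀ x) / M θ
      = (1 + (∑ y ∈ Aᶜ, Real.exp (θ * f y) * P₀ y)
          / (∑ x ∈ A, Real.exp (θ * f x) * P₀ x))⁻¹ := by
    intro θ
    rw [hMeq θ]
    rw [show (1 : ℝ) + (∑ y ∈ Aᶜ, Real.exp (θ * f y) * P₀ y)
          / (∑ x ∈ A, Real.exp (θ * f x) * P₀ x)
        = ((∑ x ∈ A, Real.exp (θ * f x) * P₀ x)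
            + ∑ y ∈ Aᶜ, Real.exp (θ * f y) * P₀ y)
          / (∑ x ∈ A, Real.exp (θ * f x) * P₀ x) by
        rw [add_div, div_self (ne_of_gt (hSpos θ))], inv_div]
  have hg1 : Tendsto (fun θ : ℝ => (∑ x ∈ A, Real.exp (θ * f x) * P₀ x) / M θ)
      atTop (nhds 1) := by
    have h7 := (tendsto_const_nhds.add hr).inv₀ (by norm_num : (1 : ℝ) + 0 ≠ 0)
    rw [show ((1 : ℝ) + 0)⁻¹ = 1 by norm_num] at h7
    exact h7.congr fun θ => (hfrac θ).symm
  have hlog : Tendsto (fun θ : ℝ =>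
      Real.log ((∑ x ∈ A, Real.exp (θ * f x) * P₀ x) / M θ)) atTop (nhds 0) := by
    have h8 := (Real.continuousAt_log one_ne_zero).tendsto.comp hg1
    rwa [Real.log_one] at h8
  have h9 := hlog.sub_const (Real.log a)
  rw [zero_sub] at h9
  exact h9.congr fun θ => (hIeq θ).symm
end

section
/- Let Π be an n×n real matrix with nonnegative entries whose rows each sum to 1 (a stochastic matrix), and suppose there exists m ≥ 1 such that every entry of Π^m is strictly positive. Let π be a probability row vector (nonnegative entries summing to 1) satisfying π Π = π. Then for every probability row vector μ, the sequence μ Π^t converges entrywise to π as t → ∞. -/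
open Finset Matrix Filter

private lemma stmt4_pow_rowsum {n : ℕ} (P : Matrix (Fin n) (Fin n) ℝ)
    (hrow : ∀ i, ∑ j, P i j = 1) : ∀ t i, ∑ j, (P ^ t) i j = 1 := by
  intro t
  induction t with
  | zero => intro i; simp [Matrix.one_apply]
  | succ t ih =>
    intro i
    rw [pow_succ]
    simp only [Matrix.mul_apply]
    rw [Finset.sum_comm]
    have : ∀ k ∈ Finset.univ, ∑ j, (P ^ t) i k * P k j = (P ^ t) i k := by
      intro k _
      rw [← Finset.mul_sum, hrow k, mul_one]
    rw [Finset.sum_congr rfl this, ih i]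

private lemma stmt4_pow_nonneg {n : ℕ} (P : Matrix (Fin n) (Fin n) ℝ)
    (hnn : ∀ i j, 0 ≤ P i j) : ∀ t i j, 0 ≤ (P ^ t) i j := by
  intro t
  induction t with
  | zero => intro i j; rw [pow_zero]; by_cases h : i = j <;> simp [Matrix.one_apply, h]
  | succ t ih =>
    intro i j
    rw [pow_succ, Matrix.mul_apply]
    exact Finset.sum_nonneg fun k _ => mul_nonneg (ih i k) (hnn k j)

/-- Dobrushin-type contraction: if all entries of a stochastic matrix `A`
are at least `δ`, then `vecMul` by `A` contracts mean-zero vectors in `ℓ¹`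
by the factor `1 - n*δ`. -/
private lemma stmt4_contract {n : ℕ} (A : Matrix (Fin n) (Fin n) ℝ) (δ : ℝ)
    (hA : ∀ i j, δ ≤ A i j) (hrow : ∀ i, ∑ j, A i j = 1)
    (x : Fin n → ℝ) (hx : ∑ i, x i = 0) :
    ∑ j, |Matrix.vecMul x A j| ≤ (1 - n * δ) * ∑ i, |x i| := by
  have key : ∀ j, |Matrix.vecMul x A j| ≤ ∑ i, |x i| * (A i j - δ) := by
    intro j
    have h1 : Matrix.vecMul x A j = ∑ i, x i * (A i j - δ) := by
      simp only [Matrix.vecMul, dotProduct, mul_sub]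
      rw [Finset.sum_sub_distrib, ← Finset.sum_mul, hx, zero_mul, sub_zero]
    rw [h1]
    calc |∑ i, x i * (A i j - δ)| ≤ ∑ i, |x i * (A i j - δ)| :=
          Finset.abs_sum_le_sum_abs _ _
      _ = ∑ i, |x i| * (A i j - δ) := by
          refine Finset.sum_congr rfl fun i _ => ?_
          rw [abs_mul, abs_of_nonneg (sub_nonneg.2 (hA i j))]
  calc ∑ j, |Matrix.vecMul x A j| ≤ ∑ j, ∑ i, |x i| * (A i j - δ) :=
        Finset.sum_le_sum fun j _ => key j
    _ = ∑ i, |x i| * (1 - n * δ) := by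
        rw [Finset.sum_comm]
        refine Finset.sum_congr rfl fun i _ => ?_
        rw [← Finset.mul_sum, Finset.sum_sub_distrib, hrow i, Finset.sum_const,
          Finset.card_univ, Fintype.card_fin, nsmul_eq_mul]
    _ = (1 - n * δ) * ∑ i, |x i| := by rw [← Finset.sum_mul, mul_comm]

/-- For a primitive stochastic matrix (some power has all
entries positive) with stationary probability vector π, the distribution
`μ Π^t` converges entrywise to π for every initial probability vector μ. -/
theorem stmt_4 {n : ℕ} (Pmat : Matrix (Fin n) (Fin n) ℝ)
    (hnn : ∀ i j, 0 ≤ Pmat i j) (hrow : ∀ i, ∑ j, Pmat i j = 1)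
    (hprim : ∃ m : ℕ, 1 ≤ m ∧ ∀ i j, 0 < (Pmat ^ m) i j)
    (π : Fin n → ℝ) (hπnn : ∀ i, 0 ≤ π i) (hπsum : ∑ i, π i = 1)
    (hstat : Matrix.vecMul π Pmat = π)
    (μ : Fin n → ℝ) (hμnn : ∀ i, 0 ≤ μ i) (hμsum : ∑ i, μ i = 1) :
    ∀ j, Filter.Tendsto (fun t : ℕ => Matrix.vecMul μ (Pmat ^ t) j)
      Filter.atTop (nhds (π j)) := by
  intro j
  obtain ⟨m, hm1, hmpos⟩ := hprim
  have hn : 0 < n := j.pos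
  -- the minimal entry of Pmat ^ m
  set i0 : Fin n := ⟨0, hn⟩
  have hne : (Finset.univ : Finset (Fin n × Fin n)).Nonempty := ⟨(i0, i0), Finset.mem_univ _⟩
  set δ : ℝ := Finset.univ.inf' hne (fun p : Fin n × Fin n => (Pmat ^ m) p.1 p.2) with hδdef
  have hδpos : 0 < δ := by
    rw [hδdef]
    rw [Finset.lt_inf'_iff]
    exact fun p _ => hmpos p.1 p.2
  have hδle : ∀ i j, δ ≤ (Pmat ^ m) i j := by
    intro i j'
    exact Finset.inf'_le _ (Finset.mem_univ (i, j'))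
  set c : ℝ := 1 - n * δ with hcdef
  have hc1 : c < 1 := by
    have : (0:ℝ) < n * δ := mul_pos (by exact_mod_cast hn) hδpos
    linarith
  have hc0 : 0 ≤ c := by
    have h1 : (n : ℝ) * δ = ∑ _j : Fin n, δ := by
      rw [Finset.sum_const, Finset.card_univ, Fintype.card_fin, nsmul_eq_mul]
    have h2 : ∑ _j : Fin n, δ ≤ ∑ j', (Pmat ^ m) i0 j' :=
      Finset.sum_le_sum fun j' _ => hδle i0 j'
    rw [stmt4_pow_rowsum Pmat hrow m i0] at h2
    rw [hcdef]; linarith [h1 ▸ h2]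
  -- stationarity for all powers
  have hstatpow : ∀ t, Matrix.vecMul π (Pmat ^ t) = π := by
    intro t
    induction t with
    | zero => simp
    | succ t ih => rw [pow_succ, ← Matrix.vecMul_vecMul, ih, hstat]
  -- the deviation vector and its ℓ¹ norm
  set x : ℕ → Fin n → ℝ := fun t i => Matrix.vecMul μ (Pmat ^ t) i - π i with hxdef
  set f : ℕ → ℝ := fun t => ∑ i, |x t i| with hfdef
  have hxsum : ∀ t, ∑ i, x t i = 0 := by
    intro t
    have h1 : ∑ i, Matrix.vecMul μ (Pmat ^ t) i = 1 := by
      simp only [Matrix.vecMul, dotProduct]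
      rw [Finset.sum_comm]
      have : ∀ i ∈ Finset.univ, ∑ j', μ i * (Pmat ^ t) i j' = μ i := by
        intro i _
        rw [← Finset.mul_sum, stmt4_pow_rowsum Pmat hrow t i, mul_one]
      rw [Finset.sum_congr rfl this, hμsum]
    simp only [hxdef, Finset.sum_sub_distrib, h1, hπsum, sub_self]
  have hxstep : ∀ t s, x (t + s) = Matrix.vecMul (x t) (Pmat ^ s) := by
    intro t s
    funext i
    have h1 : Matrix.vecMul μ (Pmat ^ (t + s)) = Matrix.vecMul (Matrix.vecMul μ (Pmat ^ t)) (Pmat ^ s) := by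
      rw [Matrix.vecMul_vecMul, ← pow_add]
    have h2 : (fun i => Matrix.vecMul μ (Pmat ^ t) i - π i)
        = Matrix.vecMul μ (Pmat ^ t) - π := rfl
    simp only [hxdef, h1, h2, Matrix.sub_vecMul, hstatpow s, Pi.sub_apply]
  have hf0 : ∀ t, 0 ≤ f t := fun t => Finset.sum_nonneg fun i _ => abs_nonneg _
  -- one-step non-expansiveness
  have hmono : ∀ t, f (t + 1) ≤ f t := by
    intro t
    have := stmt4_contract Pmat 0 (fun i j' => hnn i j') hrow (x t) (hxsum t)
    simp only [mul_zero, sub_zero, one_mul] at this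
    calc f (t + 1) = ∑ i, |Matrix.vecMul (x t) Pmat i| := by
          rw [hfdef]
          have h := hxstep t 1
          rw [pow_one] at h
          simp [h]
      _ ≤ f t := by
          rw [hfdef]
          have h1 := stmt4_contract Pmat 0 (fun i j' => hnn i j') hrow (x t) (hxsum t)
          simpa using h1
  have hanti : ∀ s t, s ≤ t → f t ≤ f s := by
    intro s t hst
    induction t with
    | zero => simp_all
    | succ t ih =>
      rcases Nat.lt_or_ge s (t+1) with h | h
      · exact le_trans (hmono t) (ih (Nat.lt_succ_iff.mp h))
      · have : s = t + 1 := le_antisymm hst h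
        subst this; exact le_refl _
  -- m-step contraction
  have hcontr : ∀ t, f (t + m) ≤ c * f t := by
    intro t
    have h1 := stmt4_contract (Pmat ^ m) δ hδle
      (stmt4_pow_rowsum Pmat hrow m) (x t) (hxsum t)
    rw [hfdef]
    have h2 := hxstep t m
    simp only [h2]
    exact h1
  -- iterated contraction
  have hiter : ∀ q r, f (q * m + r) ≤ c ^ q * f r := by
    intro q
    induction q with
    | zero => intro r; simp
    | succ q ih =>
      intro r
      have h1 : (q + 1) * m + r = (q * m + r) + m := by ring
      rw [h1]
      calc f ((q * m + r) + m) ≤ c * f (q * m + r) := hcontr _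
        _ ≤ c * (c ^ q * f r) := by
            exact mul_le_mul_of_nonneg_left (ih r) hc0
        _ = c ^ (q + 1) * f r := by ring
  have hbound : ∀ t, f t ≤ c ^ (t / m) * f 0 := by
    intro t
    have h1 : t / m * m + t % m = t := by rw [mul_comm]; exact Nat.div_add_mod t m
    calc f t = f (t / m * m + t % m) := by rw [h1]
      _ ≤ c ^ (t / m) * f (t % m) := hiter _ _
      _ ≤ c ^ (t / m) * f 0 := by
          exact mul_le_mul_of_nonneg_left (hanti 0 _ (Nat.zero_le _)) (pow_nonneg hc0 _)
  -- the geometric bound tends to 0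
  have hdiv : Filter.Tendsto (fun t : ℕ => t / m) Filter.atTop Filter.atTop := by
    refine Filter.tendsto_atTop_atTop.2 fun b => ⟨b * m, fun t ht => ?_⟩
    exact (Nat.le_div_iff_mul_le (by omega)).2 ht
  have hpow : Filter.Tendsto (fun q : ℕ => c ^ q * f 0) Filter.atTop (nhds 0) := by
    have h := tendsto_pow_atTop_nhds_zero_of_lt_one hc0 hc1
    have := h.mul_const (f 0)
    simpa using this
  have hgeo : Filter.Tendsto (fun t : ℕ => c ^ (t / m) * f 0) Filter.atTop (nhds 0) :=
    hpow.comp hdiv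
  -- squeeze
  have hx0 : Filter.Tendsto (fun t : ℕ => x t j) Filter.atTop (nhds 0) := by
    refine squeeze_zero_norm (fun t => ?_) hgeo
    calc ‖x t j‖ = |x t j| := rfl
      _ ≤ f t := Finset.single_le_sum (fun i _ => abs_nonneg (x t i)) (Finset.mem_univ j)
      _ ≤ c ^ (t / m) * f 0 := hbound t
  have : Filter.Tendsto (fun t : ℕ => x t j + π j) Filter.atTop (nhds (0 + π j)) :=
    hx0.add_const (π j)
  simpa [hxdef] using this
end

section
/- Let 0 < p₀ < q < 1 and let X₁, X₂, … be i.i.d. Bernoulli(p₀) random variables with S_n = ∑_{i=1}^n X_i. Then lim_{n→∞} −(1/n)·log P(S_n ≥ n·q) = q·log(q/p₀) + (1−q)·log((1−q)/(1−p₀)). -/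
/-!
Chernoff's bound with the optimal exponential tilt `t = log (q (1 - p₀) / (p₀ (1 - q)))`
gives `P(S_n ≥ n q) ≤ exp (-n D(q ‖ p₀))` for every `n`. Conversely, with `k = ⌈n q⌉`,
`P(S_n ≥ n q) ≥ P(S_n = k) = C(n, k) p₀ᵏ (1 - p₀)ⁿ⁻ᵏ`; since `C(n, k) kᵏ (n - k)ⁿ⁻ᵏ` is the largest
of the `n + 1` terms of the binomial expansion of `nⁿ = (k + (n - k))ⁿ`, this is at least
`exp (-n D(k/n ‖ p₀)) / (n + 1)`, and `D(k/n ‖ p₀) + log (n + 1) / n → D(q ‖ p₀)`.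
-/

open MeasureTheory ProbabilityTheory Filter Finset Real Topology

/-- `bernoulliKL q p` is the divergence `D(Ber(q) ‖ Ber(p))`. -/
noncomputable def bernoulliKL (q p : ℝ) : ℝ :=
  q * log (q / p) + (1 - q) * log ((1 - q) / (1 - p))

section ZeroOneValued

variable {Ω : Type*} {X : Ω → ℝ}

lemma eq_indicator_of_zero_or_one (h01 : ∀ ω, X ω = 0 ∨ X ω = 1) :
    X = (X ⁻¹' {1}).indicator 1 := by
  funext ω
  rcases h01 ω with h | h <;> simp [h]

lemma exp_mul_of_zero_or_one (h01 : ∀ ω, X ω = 0 ∨ X ω = 1) (t : ℝ) :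
    (fun ω ↦ exp (t * X ω)) = fun ω ↦ 1 + (exp t - 1) * X ω := by
  funext ω
  rcases h01 ω with h | h <;> simp [h]

variable [MeasurableSpace Ω] {P : Measure Ω}

lemma integrable_of_zero_or_one [IsFiniteMeasure P] (hX : Measurable X)
    (h01 : ∀ ω, X ω = 0 ∨ X ω = 1) : Integrable X P := by
  rw [eq_indicator_of_zero_or_one h01]
  exact (integrable_const 1).indicator (hX (measurableSet_singleton 1))

lemma integrable_exp_mul_of_zero_or_one [IsFiniteMeasure P] (hX : Measurable X)
    (h01 : ∀ ω, X ω = 0 ∨ X ω = 1) (t : ℝ) : Integrable (fun ω ↦ exp (t * X ω)) P := by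
  rw [exp_mul_of_zero_or_one h01]
  exact (integrable_const 1).add ((integrable_of_zero_or_one hX h01).const_mul _)

lemma mgf_of_zero_or_one [IsProbabilityMeasure P] (hX : Measurable X)
    (h01 : ∀ ω, X ω = 0 ∨ X ω = 1) {p : ℝ} (hp : 0 ≤ p)
    (hlaw : P {ω | X ω = 1} = ENNReal.ofReal p) (t : ℝ) : mgf X P t = 1 - p + p * exp t := by
  have hmean : ∫ ω, X ω ∂P = p := by
    conv_lhs => rw [eq_indicator_of_zero_or_one h01]
    rw [integral_indicator_one (hX (measurableSet_singleton 1)), measureReal_def]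
    exact (congrArg ENNReal.toReal hlaw).trans (ENNReal.toReal_ofReal hp)
  rw [mgf, exp_mul_of_zero_or_one h01, integral_add (integrable_const 1)
    ((integrable_of_zero_or_one hX h01).const_mul _), integral_const, integral_const_mul, hmean,
    probReal_univ, one_smul]
  ring

end ZeroOneValued

/-- The tilt `t` is the minimiser of `t ↦ -t q + log (1 - p + p eᵗ)`, at which the Chernoff
bound is exact. -/
lemma exp_neg_mul_mul_mgf_eq_exp_neg_bernoulliKL {p q t : ℝ} (hp0 : 0 < p) (hp1 : p < 1)
    (hq0 : 0 < q) (hq1 : q < 1) (ht : t = log (q * (1 - p) / (p * (1 - q)))) :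
    exp (-(t * q)) * (1 - p + p * exp t) = exp (-bernoulliKL q p) := by
  have h1p : 0 < 1 - p := by linarith
  have h1q : 0 < 1 - q := by linarith
  have hmgf : 1 - p + p * exp t = (1 - p) / (1 - q) := by
    rw [ht, exp_log (by positivity)]
    field_simp
    ring
  rw [hmgf, ← exp_log (by positivity : 0 < (1 - p) / (1 - q)), ← exp_add, ht, bernoulliKL,
    log_div (by positivity) (by positivity), log_mul hq0.ne' h1p.ne', log_mul hp0.ne' h1q.ne',
    log_div h1p.ne' h1q.ne', log_div hq0.ne' hp0.ne', log_div h1q.ne' h1p.ne']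
  congr 1
  ring

section BernoulliSequence

variable {Ω : Type*} {X : ℕ → Ω → ℝ}

def successPattern (X : ℕ → Ω → ℝ) (n : ℕ) (A : Finset ℕ) : Set Ω :=
  ⋂ i ∈ range n, X i ⁻¹' {if i ∈ A then 1 else 0}

lemma sum_eq_card_of_mem_successPattern {n : ℕ} {A : Finset ℕ} (hA : A ⊆ range n) {ω : Ω}
    (hω : ω ∈ successPattern X n A) : ∑ i ∈ range n, X i ω = #A := by
  simp only [successPattern, Set.mem_iInter, Set.mem_preimage, Set.mem_singleton_iff] at hω
  rw [sum_congr rfl hω, sum_ite_mem, inter_eq_right.2 hA, sum_const, nsmul_one]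

lemma pairwiseDisjoint_successPattern (n k : ℕ) :
    Set.PairwiseDisjoint (powersetCard k (range n) : Set (Finset ℕ)) (successPattern X n) := by
  intro A hA B hB hAB
  rw [mem_coe, mem_powersetCard] at hA hB
  obtain ⟨i, hiA, hiB⟩ := not_subset.mp fun hs ↦
    hAB (eq_of_subset_of_card_le hs (hB.2.trans hA.2.symm).le)
  refine Set.disjoint_left.mpr fun ω hωA hωB ↦ ?_
  simp only [successPattern, Set.mem_iInter, Set.mem_preimage, Set.mem_singleton_iff] at hωA hωB
  have := (hωA i (hA.1 hiA)).symm.trans (hωB i (hA.1 hiA))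
  simp [hiA, hiB] at this

variable [MeasurableSpace Ω] {P : Measure Ω} [IsProbabilityMeasure P] {p : ℝ}

lemma measureReal_sum_ge_le_exp_neg_mul_bernoulliKL (hmeas : ∀ i, Measurable (X i))
    (hindep : iIndepFun X P) (h01 : ∀ i ω, X i ω = 0 ∨ X i ω = 1)
    (hlaw : ∀ i, P {ω | X i ω = 1} = ENNReal.ofReal p) (hp0 : 0 < p) {q : ℝ} (hpq : p ≤ q)
    (hq1 : q < 1) (n : ℕ) :
    P.real {ω | n * q ≤ ∑ i ∈ range n, X i ω} ≤ exp (-(n * bernoulliKL q p)) := by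
  have hq0 : 0 < q := hp0.trans_le hpq
  set t := log (q * (1 - p) / (p * (1 - q))) with ht
  have ht0 : 0 ≤ t := log_nonneg <| by
    rw [le_div_iff₀ (by nlinarith)]
    nlinarith
  have hint : Integrable (fun ω ↦ exp (t * (∑ i ∈ range n, X i) ω)) P :=
    hindep.integrable_exp_mul_sum hmeas
      fun i _ ↦ integrable_exp_mul_of_zero_or_one (hmeas i) (h01 i) t
  calc P.real {ω | n * q ≤ ∑ i ∈ range n, X i ω}
      = P.real {ω | n * q ≤ (∑ i ∈ range n, X i) ω} := by simp only [Finset.sum_apply]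
    _ ≤ exp (-t * (n * q)) * mgf (∑ i ∈ range n, X i) P t :=
        measure_ge_le_exp_mul_mgf _ ht0 hint
    _ = (exp (-(t * q)) * (1 - p + p * exp t)) ^ n := by
        rw [hindep.mgf_sum hmeas, prod_congr rfl fun i _ ↦
          mgf_of_zero_or_one (hmeas i) (h01 i) hp0.le (hlaw i) t, prod_const, card_range,
          mul_pow, ← exp_nat_mul]
        ring_nf
    _ = exp (-(n * bernoulliKL q p)) := by
        rw [exp_neg_mul_mul_mgf_eq_exp_neg_bernoulliKL hp0 (by linarith) hq0 hq1 ht,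
          ← exp_nat_mul]
        ring_nf

lemma measure_successPattern (hmeas : ∀ i, Measurable (X i)) (hindep : iIndepFun X P)
    (h01 : ∀ i ω, X i ω = 0 ∨ X i ω = 1) (hp : 0 ≤ p)
    (hlaw : ∀ i, P {ω | X i ω = 1} = ENNReal.ofReal p) {n : ℕ} {A : Finset ℕ}
    (hA : A ⊆ range n) :
    P (successPattern X n A) = ENNReal.ofReal p ^ #A * ENNReal.ofReal (1 - p) ^ (n - #A) := by
  have hfail : ∀ i, P (X i ⁻¹' {0}) = ENNReal.ofReal (1 - p) := fun i ↦ by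
    have hcompl : X i ⁻¹' {0} = (X i ⁻¹' {1})ᶜ := by
      ext ω
      rcases h01 i ω with h | h <;> simp [h]
    rw [hcompl, prob_compl_eq_one_sub (hmeas i (measurableSet_singleton 1))]
    rw [← ENNReal.ofReal_one, ENNReal.ofReal_sub _ hp, ← hlaw i]
    rfl
  rw [successPattern, hindep.measure_inter_preimage_eq_mul _ fun i _ ↦ measurableSet_singleton _]
  have hfactor : ∀ i, P (X i ⁻¹' {if i ∈ A then 1 else 0}) =
      if i ∈ A then ENNReal.ofReal p else ENNReal.ofReal (1 - p) := fun i ↦ by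
    split_ifs
    exacts [hlaw i, hfail i]
  simp only [hfactor, prod_ite, prod_const, filter_mem_eq_inter, inter_eq_right.2 hA]
  congr 2
  rw [filter_not, filter_mem_eq_inter, inter_eq_right.2 hA, card_sdiff_of_subset hA, card_range]

lemma choose_mul_pow_mul_pow_le_measureReal_sum_eq (hmeas : ∀ i, Measurable (X i))
    (hindep : iIndepFun X P) (h01 : ∀ i ω, X i ω = 0 ∨ X i ω = 1) (hp0 : 0 ≤ p)
    (hp1 : p ≤ 1) (hlaw : ∀ i, P {ω | X i ω = 1} = ENNReal.ofReal p) (n k : ℕ) :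
    n.choose k * p ^ k * (1 - p) ^ (n - k) ≤ P.real {ω | ∑ i ∈ range n, X i ω = k} := by
  have hunion : ⋃ A ∈ powersetCard k (range n), successPattern X n A ⊆
      {ω | ∑ i ∈ range n, X i ω = k} := by
    refine Set.iUnion₂_subset fun A hA ω hω ↦ ?_
    rw [mem_powersetCard] at hA
    show _ = _
    rw [sum_eq_card_of_mem_successPattern hA.1 hω, hA.2]
  have hterm : ∀ A ∈ powersetCard k (range n),
      P.real (successPattern X n A) = p ^ k * (1 - p) ^ (n - k) := fun A hA ↦ by
    rw [mem_powersetCard] at hA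
    rw [measureReal_def, measure_successPattern hmeas hindep h01 hp0 hlaw hA.1, hA.2]
    simp [ENNReal.toReal_ofReal hp0, ENNReal.toReal_ofReal (sub_nonneg.2 hp1)]
  calc n.choose k * p ^ k * (1 - p) ^ (n - k)
      = ∑ A ∈ powersetCard k (range n), P.real (successPattern X n A) := by
        rw [sum_congr rfl hterm, sum_const, card_powersetCard, card_range, nsmul_eq_mul, mul_assoc]
    _ = P.real (⋃ A ∈ powersetCard k (range n), successPattern X n A) :=
        (measureReal_biUnion_finset (pairwiseDisjoint_successPattern n k) fun A _ ↦
          .biInter (Set.to_countable _) fun i _ ↦ hmeas i (measurableSet_singleton _)).symm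
    _ ≤ P.real {ω | ∑ i ∈ range n, X i ω = k} := measureReal_mono hunion

end BernoulliSequence

namespace Nat

lemma monotoneOn_choose_mul_pow_mul_pow {n k : ℕ} (hk : k ≤ n) :
    MonotoneOn (fun j ↦ n.choose j * k ^ j * (n - k) ^ (n - j)) (Set.Iic k) := by
  refine monotoneOn_of_le_succ Set.ordConnected_Iic fun j _ _ hj ↦ ?_
  simp only [Order.succ_eq_add_one, Set.mem_Iic] at hj ⊢
  have hratio : n.choose j * (n - k) ≤ n.choose (j + 1) * k :=
    calc n.choose j * (n - k) ≤ n.choose j * (n - j) := by gcongr; omega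
      _ = n.choose (j + 1) * (j + 1) := (choose_succ_right_eq n j).symm
      _ ≤ n.choose (j + 1) * k := by gcongr
  obtain ⟨m, hm⟩ : ∃ m, n - j = m + 1 := ⟨n - (j + 1), by omega⟩
  simp only [show n - (j + 1) = m by omega, hm, pow_succ]
  calc n.choose j * k ^ j * ((n - k) ^ m * (n - k))
      = n.choose j * (n - k) * (k ^ j * (n - k) ^ m) := by ring
    _ ≤ n.choose (j + 1) * k * (k ^ j * (n - k) ^ m) := by gcongr
    _ = n.choose (j + 1) * (k ^ j * k) * (n - k) ^ m := by ring

lemma antitoneOn_choose_mul_pow_mul_pow (n k : ℕ) :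
    AntitoneOn (fun j ↦ n.choose j * k ^ j * (n - k) ^ (n - j)) (Set.Icc k n) := by
  refine antitoneOn_of_succ_le Set.ordConnected_Icc fun j _ hj hj' ↦ ?_
  simp only [Order.succ_eq_add_one, Set.mem_Icc] at hj hj' ⊢
  obtain ⟨hkj, -⟩ := hj
  obtain ⟨-, hjn⟩ := hj'
  have hratio : n.choose (j + 1) * k ≤ n.choose j * (n - k) :=
    calc n.choose (j + 1) * k ≤ n.choose (j + 1) * (j + 1) := by gcongr; omega
      _ = n.choose j * (n - j) := choose_succ_right_eq n j
      _ ≤ n.choose j * (n - k) := by gcongr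
  obtain ⟨m, hm⟩ : ∃ m, n - j = m + 1 := ⟨n - (j + 1), by omega⟩
  simp only [show n - (j + 1) = m by omega, hm, pow_succ]
  calc n.choose (j + 1) * (k ^ j * k) * (n - k) ^ m
      = n.choose (j + 1) * k * (k ^ j * (n - k) ^ m) := by ring
    _ ≤ n.choose j * (n - k) * (k ^ j * (n - k) ^ m) := by gcongr
    _ = n.choose j * k ^ j * ((n - k) ^ m * (n - k)) := by ring

lemma choose_mul_pow_mul_pow_le {n k j : ℕ} (hk : k ≤ n) (hj : j ≤ n) :
    n.choose j * k ^ j * (n - k) ^ (n - j) ≤ n.choose k * k ^ k * (n - k) ^ (n - k) := by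
  rcases le_total j k with hjk | hkj
  · exact monotoneOn_choose_mul_pow_mul_pow hk hjk Set.self_mem_Iic hjk
  · exact antitoneOn_choose_mul_pow_mul_pow n k ⟨le_rfl, hk⟩ ⟨hkj, hj⟩ hkj

lemma pow_le_succ_mul_choose_mul_pow_mul_pow {n k : ℕ} (hk : k ≤ n) :
    n ^ n ≤ (n + 1) * (n.choose k * k ^ k * (n - k) ^ (n - k)) :=
  calc n ^ n = ∑ j ∈ range (n + 1), n.choose j * k ^ j * (n - k) ^ (n - j) := by
        rw [← Nat.add_sub_cancel' hk, add_pow, Nat.add_sub_cancel' hk]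
        exact sum_congr rfl fun j _ ↦ by rw [Nat.cast_id]; ring
    _ ≤ ∑ _j ∈ range (n + 1), n.choose k * k ^ k * (n - k) ^ (n - k) :=
        sum_le_sum fun j hj ↦ choose_mul_pow_mul_pow_le hk (mem_range_succ_iff.1 hj)
    _ = (n + 1) * (n.choose k * k ^ k * (n - k) ^ (n - k)) := by
        rw [sum_const, card_range, smul_eq_mul]

end Nat

lemma mul_bernoulliKL_div {p x y : ℝ} (hp0 : 0 < p) (hp1 : p < 1) (hx : 0 < x) (hxy : x < y) :
    y * bernoulliKL (x / y) p =
      x * log x + (y - x) * log (y - x) - y * log y - x * log p - (y - x) * log (1 - p) := by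
  have hy : 0 < y := hx.trans hxy
  have h1p : 0 < 1 - p := by linarith
  have hyx : 0 < y - x := by linarith
  have hcompl : 1 - x / y = (y - x) / y := by field_simp
  rw [bernoulliKL, hcompl, div_div, div_div, log_div hx.ne' (by positivity),
    log_div hyx.ne' (by positivity), log_mul hy.ne' hp0.ne', log_mul hy.ne' h1p.ne']
  field_simp
  ring

lemma neg_log_choose_mul_pow_mul_pow_le {p : ℝ} (hp0 : 0 < p) (hp1 : p < 1) {n k : ℕ}
    (hk0 : 0 < k) (hkn : k < n) :
    -log (n.choose k * p ^ k * (1 - p) ^ (n - k)) ≤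
      n * bernoulliKL (k / n) p + log (n + 1) := by
  have hn : (0 : ℝ) < n := by exact_mod_cast hk0.trans hkn
  have hk : (0 : ℝ) < k := by exact_mod_cast hk0
  have hnk : (0 : ℝ) < (n - k : ℕ) := by exact_mod_cast Nat.sub_pos_of_lt hkn
  have hchoose : (0 : ℝ) < n.choose k := by exact_mod_cast Nat.choose_pos hkn.le
  have hmax : ((n : ℝ) ^ n) ≤ (n + 1) * (n.choose k * k ^ k * (n - k : ℕ) ^ (n - k)) := by
    exact_mod_cast Nat.pow_le_succ_mul_choose_mul_pow_mul_pow hkn.le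
  have hlog := log_le_log (by positivity) hmax
  rw [log_pow, log_mul (by positivity) (by positivity), log_mul (by positivity) (by positivity),
    log_mul hchoose.ne' (by positivity), log_pow, log_pow] at hlog
  rw [log_mul (by positivity) (by positivity), log_mul hchoose.ne' (by positivity), log_pow,
    log_pow, mul_bernoulliKL_div hp0 hp1 hk (by exact_mod_cast hkn)]
  push_cast [hkn.le] at hlog ⊢
  linarith

lemma continuousAt_bernoulliKL {p q : ℝ} (hp0 : p ≠ 0) (hp1 : p ≠ 1) (hq0 : q ≠ 0)
    (hq1 : q ≠ 1) : ContinuousAt (bernoulliKL · p) q := by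
  have h1p : 1 - p ≠ 0 := sub_ne_zero.2 hp1.symm
  have h1q : 1 - q ≠ 0 := sub_ne_zero.2 hq1.symm
  unfold bernoulliKL
  fun_prop (disch := positivity)

lemma tendsto_log_add_one_div_natCast :
    Tendsto (fun n : ℕ ↦ log (n + 1) / n) atTop (𝓝 0) := by
  have h := (tendsto_pow_log_div_mul_add_atTop 1 (-1) 1 one_ne_zero).comp
    (tendsto_atTop_add_const_right atTop 1 tendsto_natCast_atTop_atTop)
  refine h.congr fun n ↦ ?_
  simp

lemma eventually_pos_and_ceil_mul_lt {q : ℝ} (hq0 : 0 < q) (hq1 : q < 1) :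
    ∀ᶠ n : ℕ in atTop, 0 < ⌈n * q⌉₊ ∧ ⌈n * q⌉₊ < n := by
  filter_upwards [eventually_ge_atTop 1,
    tendsto_natCast_atTop_atTop.eventually_gt_atTop (1 / (1 - q))] with n hn hnq
  rw [div_lt_iff₀ (by linarith)] at hnq
  have hlt : (⌈n * q⌉₊ : ℝ) < n :=
    (Nat.ceil_lt_add_one (by positivity)).trans_le (by linarith)
  exact ⟨Nat.ceil_pos.2 (by positivity), by exact_mod_cast hlt⟩

lemma tendsto_natCeil_mul_div_natCast {q : ℝ} (hq : 0 ≤ q) :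
    Tendsto (fun n : ℕ ↦ (⌈n * q⌉₊ : ℝ) / n) atTop (𝓝 q) := by
  simpa only [Function.comp_def, mul_comm] using
    (tendsto_nat_ceil_mul_div_atTop hq).comp tendsto_natCast_atTop_atTop

lemma le_neg_log_div_of_le_exp {a d x : ℝ} (hx : 0 < x) (ha : 0 < a)
    (h : a ≤ exp (-(x * d))) : d ≤ -log a / x := by
  rw [le_div_iff₀ hx, le_neg, mul_comm, ← log_exp (-(x * d))]
  exact log_le_log ha h

lemma neg_log_div_le_of_le {a b c d x : ℝ} (hx : 0 < x) (hb : 0 < b) (hba : b ≤ a)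
    (h : -log b ≤ x * d + c) : -log a / x ≤ d + c / x := by
  rw [div_le_iff₀ hx, add_mul, div_mul_cancel₀ _ hx.ne', mul_comm]
  exact (neg_le_neg (log_le_log hb hba)).trans h

/-- For i.i.d. Bernoulli(p₀) variables with `S_n = ∑_{i<n} X_i`
and `p₀ < q < 1`, the large-deviation limit
`−(1/n) log P(S_n ≥ n q) → q log(q/p₀) + (1−q) log((1−q)/(1−p₀))` holds. -/
theorem stmt_8 {Ω : Type*} [MeasurableSpace Ω] (P : MeasureTheory.Measure Ω)
    [MeasureTheory.IsProbabilityMeasure P]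
    (p₀ q : ℝ) (hp₀0 : 0 < p₀) (hp₀q : p₀ < q) (hq1 : q < 1)
    (X : ℕ → Ω → ℝ) (hmeas : ∀ i, Measurable (X i))
    (hindep : ProbabilityTheory.iIndepFun X P)
    (h01 : ∀ i ω, X i ω = 0 ∨ X i ω = 1)
    (hlaw : ∀ i, P {ω | X i ω = 1} = ENNReal.ofReal p₀) :
    Filter.Tendsto
      (fun n : ℕ =>
        -Real.log ((P {ω | (n : ℝ) * q ≤ ∑ i ∈ Finset.range n, X i ω}).toReal) / n)
      Filter.atTop
      (nhds (q * Real.log (q / p₀) + (1 - q) * Real.log ((1 - q) / (1 - p₀)))) := by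
  have hq0 : 0 < q := hp₀0.trans hp₀q
  have hp₀1 : p₀ < 1 := hp₀q.trans hq1
  let k (n : ℕ) : ℕ := ⌈(n : ℝ) * q⌉₊
  let tail (n : ℕ) : ℝ := P.real {ω | (n : ℝ) * q ≤ ∑ i ∈ range n, X i ω}
  have hbinom (n : ℕ) : n.choose (k n) * p₀ ^ k n * (1 - p₀) ^ (n - k n) ≤ tail n :=
    (choose_mul_pow_mul_pow_le_measureReal_sum_eq hmeas hindep h01 hp₀0.le hp₀1.le hlaw n
      (k n)).trans (measureReal_mono fun ω (hω : _ = _) ↦ show _ ≤ _ from hω ▸ Nat.le_ceil _)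
  have hbounds : ∀ᶠ n : ℕ in atTop, bernoulliKL q p₀ ≤ -log (tail n) / n ∧
      -log (tail n) / n ≤ bernoulliKL (k n / n) p₀ + log (n + 1) / n := by
    filter_upwards [eventually_pos_and_ceil_mul_lt hq0 hq1] with n ⟨hk0, hkn⟩
    have hn : (0 : ℝ) < n := by exact_mod_cast hk0.trans hkn
    have hbinom_pos : (0 : ℝ) < n.choose (k n) * p₀ ^ k n * (1 - p₀) ^ (n - k n) := by
      have := Nat.choose_pos hkn.le
      have := sub_pos.2 hp₀1
      positivity
    exact ⟨le_neg_log_div_of_le_exp hn (hbinom_pos.trans_le (hbinom n))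
        (measureReal_sum_ge_le_exp_neg_mul_bernoulliKL hmeas hindep h01 hlaw hp₀0 hp₀q.le hq1 n),
      neg_log_div_le_of_le hn hbinom_pos (hbinom n)
        (neg_log_choose_mul_pow_mul_pow_le hp₀0 hp₀1 hk0 hkn)⟩
  have hlimit : Tendsto (fun n : ℕ ↦ bernoulliKL (k n / n) p₀ + log (n + 1) / n) atTop
      (𝓝 (bernoulliKL q p₀)) := by
    simpa using ((continuousAt_bernoulliKL hp₀0.ne' hp₀1.ne hq0.ne' hq1.ne).tendsto.comp
      (tendsto_natCeil_mul_div_natCast hq0.le)).add tendsto_log_add_one_div_natCast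
  exact tendsto_of_tendsto_of_tendsto_of_le_of_le' tendsto_const_nhds hlimit
    (hbounds.mono fun _ h ↦ h.1) (hbounds.mono fun _ h ↦ h.2)
end
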